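/- Let φ ∈ Φ be strictly convex, let i be an integer with 0 ≤ i < n, let ℳ ⊆ 𝒦ⁿ and let K, L ∈ ℳ. If A_{φ,i}(K,Q)/A_i(K) = A_{φ,i}(L,Q)/A_i(L) for all Q ∈ ℳ, then K and L have the same half-width function, i.e. b(K,u) = b(L,u) for all u ∈ S^{n−1}. -/

import Mathlib

open MeasureTheory Metric Filter Set
open scoped RealInnerProductSpace ENNReal

noncomputable section

abbrev Euc (n : ℕ) := EuclideanSpace ℝ (Fin n)

/-- Support function `h(K,x) = sup {⟨x,y⟩ : y ∈ K}`. -/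
def suppFn {n : ℕ} (K : Set (Euc n)) (x : Euc n) : ℝ :=
  sSup ((fun y => ⟪x, y⟫) '' K)

/-- Half width of `K` in direction `u`: `b(K,u) = (h(K,u)+h(K,-u))/2`. -/
def halfWidth {n : ℕ} (K : Set (Euc n)) (u : Euc n) : ℝ :=
  (suppFn K u + suppFn K (-u)) / 2

/-- A convex body containing the origin in its interior. -/
def IsConvexBody {n : ℕ} (K : Set (Euc n)) : Prop :=
  IsCompact K ∧ Convex ℝ K ∧ (0 : Euc n) ∈ interior K

/-- Spherical Lebesgue measure on the unit sphere. -/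
def sphMeasure (n : ℕ) : Measure (sphere (0 : Euc n) 1) :=
  (volume : Measure (Euc n)).toSphere

/-- Width integral `A_i(K) = (1/n) ∫_{S^{n-1}} b(K,u)^{n-i} dS(u)`. -/
def widthIntegral (n i : ℕ) (K : Set (Euc n)) : ℝ :=
  (1 / (n : ℝ)) * ∫ u : sphere (0 : Euc n) 1,
    halfWidth K (u : Euc n) ^ ((n : ℝ) - i) ∂(sphMeasure n)

/-- `K` and `L` have similar width: `b(L,·) = λ b(K,·)` on the sphere for some `λ > 0`. -/
def SimilarWidth {n : ℕ} (K L : Set (Euc n)) : Prop :=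
  ∃ lam : ℝ, 0 < lam ∧ ∀ u : Euc n, ‖u‖ = 1 → halfWidth L u = lam * halfWidth K u

/-- The class `Φ`: convex, strictly decreasing `φ : (0,∞) → (0,∞)` with
`φ(0⁺)=∞`, `φ(∞)=0`, `φ(1)=1`. -/
structure IsOrliczPhi (φ : ℝ → ℝ) : Prop where
  convexOn : ConvexOn ℝ (Set.Ioi (0 : ℝ)) φ
  strictAntiOn : StrictAntiOn φ (Set.Ioi (0 : ℝ))
  pos : ∀ t : ℝ, 0 < t → 0 < φ t
  tendsto_zero : Filter.Tendsto φ (nhdsWithin 0 (Set.Ioi 0)) Filter.atTop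
  tendsto_atTop : Filter.Tendsto φ Filter.atTop (nhds 0)
  one : φ 1 = 1

/-- Orlicz mixed width integral
`A_{φ,i}(K,L) = (1/n) ∫ φ(b(L,u)/b(K,u)) b(K,u)^{n-i} dS(u)`. -/
def orliczMixedWidthIntegral (n i : ℕ) (φ : ℝ → ℝ) (K L : Set (Euc n)) : ℝ :=
  (1 / (n : ℝ)) * ∫ u : sphere (0 : Euc n) 1,
    φ (halfWidth L (u : Euc n) / halfWidth K (u : Euc n)) *
      halfWidth K (u : Euc n) ^ ((n : ℝ) - i) ∂(sphMeasure n)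

open scoped NNReal Pointwise

section supp
variable {n : ℕ} {K : Set (Euc n)}

lemma suppFn_bddAbove (hK : IsCompact K) (x : Euc n) :
    BddAbove ((fun y => ⟪x, y⟫) '' K) :=
  (hK.image (continuous_const.inner continuous_id)).bddAbove

lemma le_suppFn (hK : IsCompact K) {x y : Euc n} (hy : y ∈ K) :
    ⟪x, y⟫ ≤ suppFn K x :=
  le_csSup (suppFn_bddAbove hK x) (Set.mem_image_of_mem _ hy)

lemma suppFn_le (hne : K.Nonempty) {x : Euc n} {c : ℝ}
    (hc : ∀ y ∈ K, ⟪x, y⟫ ≤ c) : suppFn K x ≤ c :=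
  csSup_le (hne.image _) (by rintro z ⟨y, hy, rfl⟩; exact hc y hy)

lemma IsConvexBody.nonempty (hK : IsConvexBody K) : K.Nonempty :=
  ⟨0, interior_subset hK.2.2⟩

lemma suppFn_continuous (hK : IsConvexBody K) : Continuous (suppFn K) := by
  obtain ⟨R, hR⟩ : ∃ R, ∀ y ∈ K, ‖y‖ ≤ R := by
    obtain ⟨R, hR⟩ := hK.1.isBounded.subset_closedBall 0
    exact ⟨R, fun y hy => by simpa using hR hy⟩
  have key : ∀ x x' : Euc n, suppFn K x ≤ suppFn K x' + R * ‖x - x'‖ := by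
    intro x x'
    refine suppFn_le hK.nonempty fun y hy => ?_
    have h1 : ⟪x, y⟫ = ⟪x', y⟫ + ⟪x - x', y⟫ := by
      rw [← inner_add_left, add_sub_cancel]
    have h2 : ⟪x - x', y⟫ ≤ ‖x - x'‖ * ‖y‖ := real_inner_le_norm _ _
    have h3 : ‖x - x'‖ * ‖y‖ ≤ ‖x - x'‖ * R := by
      have := hR y hy
      nlinarith [norm_nonneg (x - x')]
    have h4 := le_suppFn hK.1 (x := x') hy
    nlinarith
  have hR0 : 0 ≤ R := by
    obtain ⟨y, hy⟩ := hK.nonempty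
    exact (norm_nonneg y).trans (hR y hy)
  have : LipschitzWith (Real.toNNReal R) (suppFn K) := by
    apply LipschitzWith.of_dist_le_mul
    intro x x'
    rw [Real.dist_eq, Real.coe_toNNReal _ hR0, dist_eq_norm]
    rw [abs_sub_le_iff]
    constructor
    · have := key x x'; linarith
    · have := key x' x
      rw [norm_sub_rev x' x] at this
      linarith
  exact this.continuous

lemma halfWidth_continuous (hK : IsConvexBody K) : Continuous (halfWidth K) :=
  ((suppFn_continuous hK).add ((suppFn_continuous hK).comp continuous_neg)).div_const 2

lemma halfWidth_pos (hK : IsConvexBody K) {u : Euc n} (hu : ‖u‖ = 1) :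
    0 < halfWidth K u := by
  obtain ⟨ε, hε, hball⟩ := Metric.mem_nhds_iff.mp (mem_interior_iff_mem_nhds.mp hK.2.2)
  have key : ∀ v : Euc n, ‖v‖ = 1 → ε / 2 ≤ suppFn K v := by
    intro v hv
    have hmem : (ε / 2) • v ∈ K := by
      apply hball
      simp only [mem_ball_zero_iff, norm_smul, hv, mul_one, Real.norm_eq_abs,
        abs_of_pos (half_pos hε)]
      linarith
    have h6 := le_suppFn hK.1 (x := v) hmem
    rw [real_inner_smul_right, real_inner_self_eq_norm_sq, hv] at h6
    linarith [h6]
  have h7 := key u hu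
  have h8 := key (-u) (by simpa using hu)
  unfold halfWidth
  linarith

end supp

instance (n : ℕ) : IsFiniteMeasure (sphMeasure n) := by
  unfold sphMeasure; infer_instance

lemma sphMeasure_univ_pos {n : ℕ} (hn : 0 < n) : 0 < sphMeasure n Set.univ := by
  have : Nontrivial (Euc n) := by
    refine ⟨EuclideanSpace.single ⟨0, hn⟩ 1, 0, fun h => ?_⟩
    have := congrArg norm h
    simp [EuclideanSpace.norm_single] at this
  rw [sphMeasure, Measure.toSphere_apply_univ]
  have h1 : (0:ℝ≥0∞) < Module.finrank ℝ (Euc n) := by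
    have := Module.finrank_pos (R := ℝ) (M := Euc n)
    exact_mod_cast Nat.cast_pos.mpr this
  exact ENNReal.mul_pos h1.ne' (measure_ball_pos _ _ one_pos).ne'

lemma sphMeasure_open_pos {n : ℕ} (hn : 0 < n) {U : Set (sphere (0 : Euc n) 1)}
    (hU : IsOpen U) (hne : U.Nonempty) : 0 < sphMeasure n U := by
  rw [sphMeasure, Measure.toSphere_apply' _ hU.measurableSet]
  obtain ⟨⟨v, hv⟩, hvU⟩ := hne
  have hv1 : ‖v‖ = 1 := by simpa using hv
  obtain ⟨V, hVopen, hVeq⟩ := isOpen_induced_iff.mp hU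
  -- the open cone
  set g : Euc n → Euc n := fun x => ‖x‖⁻¹ • x with hg
  set s : Set (Euc n) := {x | x ≠ 0} ∩ ball 0 1 with hs
  have hsopen : IsOpen s := (isOpen_compl_singleton.preimage continuous_id).inter isOpen_ball
  have hgc : ContinuousOn g s := by
    apply ContinuousOn.smul (f := fun x : Euc n => ‖x‖⁻¹) (g := id)
    · exact (continuous_norm.continuousOn.inv₀ fun x hx => by
        simpa [norm_eq_zero] using hx.1)
    · exact continuousOn_id
  have hWopen : IsOpen (s ∩ g ⁻¹' V) := hgc.isOpen_inter_preimage hsopen hVopen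
  have hWsub : s ∩ g ⁻¹' V ⊆ Set.Ioo (0:ℝ) 1 • ((↑) '' U) := by
    rintro x ⟨⟨hx0, hx1⟩, hxV⟩
    have hnx : (0:ℝ) < ‖x‖ := norm_pos_iff.mpr hx0
    have hgx : ‖g x‖ = 1 := by
      rw [hg]; simp [norm_smul, abs_of_pos (inv_pos.mpr hnx), inv_mul_cancel₀ hnx.ne']
    have hgmem : g x ∈ sphere (0 : Euc n) 1 := by simpa using hgx
    refine Set.mem_smul.mpr ⟨‖x‖, ?_, g x, ?_, ?_⟩
    · exact ⟨hnx, by simpa using hx1⟩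
    · exact ⟨⟨g x, hgmem⟩, by rw [← hVeq] at *; exact hxV, rfl⟩
    · rw [hg]; simp [smul_smul, mul_inv_cancel₀ hnx.ne']
  have hv0 : v ≠ 0 := fun h => by rw [h] at hv1; simp at hv1
  have hWne : (((1:ℝ)/2) • v) ∈ s ∩ g ⁻¹' V := by
    have hgv : g (((1:ℝ)/2) • v) = v := by
      rw [hg]
      simp only [norm_smul, hv1, Real.norm_eq_abs, mul_one, smul_smul]
      norm_num [abs_of_pos]
    refine ⟨⟨?_, ?_⟩, ?_⟩
    · simp only [hs, Set.mem_setOf_eq, smul_eq_zero, ne_eq]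
      push_neg
      exact ⟨by norm_num, hv0⟩
    · rw [mem_ball_zero_iff, norm_smul, hv1]
      norm_num
    · rw [Set.mem_preimage, hgv]
      rw [← hVeq] at hvU
      exact hvU
  have hvol : 0 < volume (s ∩ g ⁻¹' V) :=
    hWopen.measure_pos volume ⟨_, hWne⟩
  have h1 : (0:ℝ≥0∞) < Module.finrank ℝ (Euc n) := by
    have : Nontrivial (Euc n) := by
      refine ⟨EuclideanSpace.single ⟨0, hn⟩ 1, 0, fun h => ?_⟩
      have := congrArg norm h
      simp [EuclideanSpace.norm_single] at this
    have := Module.finrank_pos (R := ℝ) (M := Euc n)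
    exact_mod_cast Nat.cast_pos.mpr this
  exact ENNReal.mul_pos h1.ne' (((hvol.trans_le (measure_mono hWsub))).ne')


section core
variable {n : ℕ}

lemma sphere_nonempty' (hn : 0 < n) : Nonempty (sphere (0 : Euc n) 1) := by
  refine ⟨⟨EuclideanSpace.single ⟨0, hn⟩ 1, ?_⟩⟩
  simp [mem_sphere_zero_iff_norm, EuclideanSpace.norm_single]

lemma cont_integrable' {X : Type*} [TopologicalSpace X] [CompactSpace X] [T2Space X]
    [MeasurableSpace X] [OpensMeasurableSpace X] (μ : Measure X) [IsFiniteMeasure μ]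
    {f : X → ℝ} (hf : Continuous f) : Integrable f μ :=
  integrableOn_univ.mp (hf.continuousOn.integrableOn_compact isCompact_univ)

lemma cont_integrable {f : sphere (0 : Euc n) 1 → ℝ} (hf : Continuous f) :
    Integrable f (sphMeasure n) :=
  cont_integrable' _ hf

/-- Core Jensen step. -/
lemma jensen_step {i : ℕ} (hn : 2 ≤ n) (hi : i < n)
    {φ : ℝ → ℝ} (hφ : IsOrliczPhi φ) (hstrict : StrictConvexOn ℝ (Set.Ioi (0:ℝ)) φ)
    {K L : Set (Euc n)} (hK : IsConvexBody K) (hL : IsConvexBody L)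
    (hEq : ∫ u : sphere (0:Euc n) 1, φ (halfWidth L (u:Euc n) / halfWidth K (u:Euc n)) *
              halfWidth K (u:Euc n) ^ ((n:ℝ)-i) ∂(sphMeasure n)
         = ∫ u : sphere (0:Euc n) 1, halfWidth K (u:Euc n) ^ ((n:ℝ)-i) ∂(sphMeasure n)) :
    (∀ u : sphere (0:Euc n) 1, halfWidth L (u:Euc n) = halfWidth K (u:Euc n)) ∨
    (∫ u : sphere (0:Euc n) 1, (halfWidth L (u:Euc n) / halfWidth K (u:Euc n)) *
        halfWidth K (u:Euc n) ^ ((n:ℝ)-i) ∂(sphMeasure n)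
      > ∫ u : sphere (0:Euc n) 1, halfWidth K (u:Euc n) ^ ((n:ℝ)-i) ∂(sphMeasure n)) := by
  have hn0 : 0 < n := by omega
  haveI := sphere_nonempty' hn0
  set μ := sphMeasure n with hμdef
  haveI : μ.IsOpenPosMeasure :=
    ⟨fun U hU hne => (sphMeasure_open_pos hn0 hU hne).ne'⟩
  set p : ℝ := (n:ℝ) - i with hp
  have hp1 : (1:ℝ) ≤ p := by
    have : (i:ℝ) + 1 ≤ (n:ℝ) := by exact_mod_cast Nat.succ_le_of_lt hi
    simp only [hp]; linarith
  set bK : sphere (0:Euc n) 1 → ℝ := fun u => halfWidth K (u:Euc n) with hbK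
  set bL : sphere (0:Euc n) 1 → ℝ := fun u => halfWidth L (u:Euc n) with hbL
  have hbKc : Continuous bK := (halfWidth_continuous hK).comp continuous_subtype_val
  have hbLc : Continuous bL := (halfWidth_continuous hL).comp continuous_subtype_val
  have hbKpos : ∀ u, 0 < bK u := fun u => halfWidth_pos hK (norm_eq_of_mem_sphere u)
  have hbLpos : ∀ u, 0 < bL u := fun u => halfWidth_pos hL (norm_eq_of_mem_sphere u)
  set w : sphere (0:Euc n) 1 → ℝ := fun u => bK u ^ p with hw
  have hwc : Continuous w := hbKc.rpow_const fun u => Or.inl (hbKpos u).ne'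
  have hwpos : ∀ u, 0 < w u := fun u => Real.rpow_pos_of_pos (hbKpos u) p
  set f : sphere (0:Euc n) 1 → ℝ := fun u => bL u / bK u with hf
  have hfc : Continuous f := hbLc.div hbKc fun u => (hbKpos u).ne'
  have hfpos : ∀ u, 0 < f u := fun u => div_pos (hbLpos u) (hbKpos u)
  -- min and max of f
  obtain ⟨umin, -, humin⟩ :=
    isCompact_univ.exists_isMinOn univ_nonempty hfc.continuousOn
  obtain ⟨umax, -, humax⟩ :=
    isCompact_univ.exists_isMaxOn univ_nonempty hfc.continuousOn
  set a : ℝ := f umin with hadef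
  set b : ℝ := f umax with hbdef
  have ha0 : 0 < a := hfpos umin
  have hfmem : ∀ u, f u ∈ Set.Icc a b := fun u =>
    ⟨isMinOn_iff.mp humin u trivial, isMaxOn_iff.mp humax u trivial⟩
  have hIccIoi : Set.Icc a b ⊆ Set.Ioi (0:ℝ) := fun x hx => lt_of_lt_of_le ha0 hx.1
  -- the weighted measure
  set d : sphere (0:Euc n) 1 → ℝ≥0 := fun u => (w u).toNNReal with hd
  have hdmeas : Measurable d := hwc.measurable.real_toNNReal
  set ν : Measure (sphere (0:Euc n) 1) := μ.withDensity (fun u => (d u : ℝ≥0∞)) with hν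
  have hconv : ∀ g : sphere (0:Euc n) 1 → ℝ,
      ∫ u, g u ∂ν = ∫ u, w u * g u ∂μ := by
    intro g
    rw [hν, integral_withDensity_eq_integral_smul hdmeas]
    refine integral_congr_ae (Filter.Eventually.of_forall fun u => ?_)
    beta_reduce
    rw [NNReal.smul_def, Real.coe_toNNReal _ (hwpos u).le, smul_eq_mul]
  obtain ⟨uw, -, huw⟩ := isCompact_univ.exists_isMaxOn univ_nonempty hwc.continuousOn
  haveI : IsFiniteMeasure ν := by
    rw [hν]
    apply isFiniteMeasure_withDensity
    apply LT.lt.ne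
    have hle : ∀ u, (d u : ℝ≥0∞) ≤ ((d uw : ℝ≥0) : ℝ≥0∞) := by
      intro u
      exact_mod_cast Real.toNNReal_mono (isMaxOn_iff.mp huw u trivial)
    calc ∫⁻ u, (d u : ℝ≥0∞) ∂μ ≤ ∫⁻ _, ((d uw : ℝ≥0) : ℝ≥0∞) ∂μ := lintegral_mono hle
    _ = ((d uw : ℝ≥0) : ℝ≥0∞) * μ Set.univ := lintegral_const _
    _ < ⊤ := ENNReal.mul_lt_top ENNReal.coe_lt_top (measure_lt_top _ _)
  have hEq' : ∫ u, φ (f u) * w u ∂μ = ∫ u, w u ∂μ := hEq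
  set I : ℝ := ∫ u, w u ∂μ with hI
  have hμuniv : 0 < (μ Set.univ).toReal :=
    ENNReal.toReal_pos (sphMeasure_univ_pos hn0).ne' (measure_ne_top _ _)
  obtain ⟨uw0, -, huw0⟩ := isCompact_univ.exists_isMinOn univ_nonempty hwc.continuousOn
  have hIpos : 0 < I := by
    have h1 : ∫ (_ : sphere (0:Euc n) 1), w uw0 ∂μ ≤ I := by
      apply integral_mono (integrable_const _) (cont_integrable hwc)
      exact fun u => isMinOn_iff.mp huw0 u trivial
    rw [integral_const, smul_eq_mul, measureReal_def] at h1
    have := hwpos uw0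
    nlinarith
  have hνuniv : (ν Set.univ).toReal = I := by
    have h1 := hconv (fun _ => (1:ℝ))
    rw [integral_const, smul_eq_mul, mul_one] at h1
    simpa [mul_one, measureReal_def] using h1
  have hφf : Continuous fun u => φ (f u) :=
    (hφ.convexOn.continuousOn isOpen_Ioi).comp_continuous hfc fun u => hfpos u
  have hfint : Integrable f ν := cont_integrable' ν hfc
  have hgint : Integrable (φ ∘ f) ν := cont_integrable' ν hφf
  rcases (hstrict.subset hIccIoi (convex_Icc a b)).ae_eq_const_or_map_average_lt
      ((hφ.convexOn.continuousOn isOpen_Ioi).mono hIccIoi) isClosed_Icc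
      (Filter.Eventually.of_forall fun u => hfmem u) hfint hgint with hcase | hcase
  · -- equality case
    left
    set c : ℝ := ⨍ u, f u ∂ν with hc
    have hν0 : ν {u | ¬ f u = c} = 0 := ae_iff.mp hcase
    have hAopen : IsOpen {u | ¬ f u = c} := by
      have : {u | ¬ f u = c} = f ⁻¹' ({c}ᶜ) := rfl
      rw [this]
      exact isOpen_compl_singleton.preimage hfc
    have hμ0 : μ {u | ¬ f u = c} = 0 := by
      rw [hν, withDensity_apply _ hAopen.measurableSet] at hν0
      have hlow : ((d uw0 : ℝ≥0) : ℝ≥0∞) * μ {u | ¬ f u = c}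
          ≤ ∫⁻ u in {u | ¬ f u = c}, (d u : ℝ≥0∞) ∂μ := by
        rw [← setLIntegral_const]
        apply setLIntegral_mono' hAopen.measurableSet
        intro u _
        exact_mod_cast Real.toNNReal_mono (isMinOn_iff.mp huw0 u trivial)
      rw [hν0] at hlow
      have hd0 : ((d uw0 : ℝ≥0) : ℝ≥0∞) ≠ 0 := by
        simp only [ne_eq, ENNReal.coe_eq_zero, hd]
        exact fun hcon => absurd (Real.toNNReal_eq_zero.mp hcon) (not_le.mpr (hwpos uw0))
      have h9 := le_antisymm hlow zero_le
      exact (mul_eq_zero.mp h9).resolve_left hd0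
    have haef : f =ᵐ[μ] fun _ => c := by
      rw [Filter.EventuallyEq, ae_iff]
      exact hμ0
    have hfeqc : f = fun _ => c := (hfc.ae_eq_iff_eq μ continuous_const).mp haef
    have hc0 : 0 < c := by
      have h2 := congrFun hfeqc umin
      rw [← h2]
      exact hfpos umin
    have h3 : ∫ u, φ (f u) * w u ∂μ = φ c * I := by
      rw [hfeqc, hI]
      exact integral_const_mul _ _
    have hφc : φ c = 1 := by
      have h4 : φ c * I = 1 * I := by rw [one_mul, ← h3, hEq']
      exact mul_right_cancel₀ hIpos.ne' h4
    have hc1 : c = 1 := hφ.strictAntiOn.injOn (Set.mem_Ioi.mpr hc0)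
      (Set.mem_Ioi.mpr one_pos) (by rw [hφc, hφ.one])
    intro u
    have h4 := congrFun hfeqc u
    simp only [hc1] at h4
    have h5 : bL u = bK u := by
      have := (div_eq_one_iff_eq (hbKpos u).ne').mp h4
      exact this
    exact h5
  · -- strict case
    right
    show (∫ u, f u * w u ∂μ) > I
    have havg : ⨍ u, φ (f u) ∂ν = 1 := by
      rw [average_eq, measureReal_def, hνuniv, smul_eq_mul, hconv (fun u => φ (f u))]
      rw [show ∫ u, w u * φ (f u) ∂μ = ∫ u, φ (f u) * w u ∂μ from
        integral_congr_ae (Filter.Eventually.of_forall fun u => mul_comm _ _), hEq']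
      exact inv_mul_cancel₀ hIpos.ne'
    set m : ℝ := ⨍ u, f u ∂ν with hm
    set J : ℝ := ∫ u, f u * w u ∂μ with hJ
    have hmJ : m = I⁻¹ * J := by
      rw [hm, average_eq, measureReal_def, hνuniv, smul_eq_mul, hconv f, hJ]
      congr 1
      exact integral_congr_ae (Filter.Eventually.of_forall fun u => mul_comm _ _)
    have haJ : a * I ≤ J := by
      rw [hJ, hI, ← integral_const_mul]
      apply integral_mono (cont_integrable (continuous_const.mul hwc))
        (cont_integrable (hfc.mul hwc))
      intro u
      have := (hfmem u).1
      have := (hwpos u).le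
      apply mul_le_mul_of_nonneg_right (hfmem u).1 (hwpos u).le
    have hm0 : 0 < m := by
      rw [hmJ]
      have hJ0 : 0 < J := lt_of_lt_of_le (mul_pos ha0 hIpos) haJ
      exact mul_pos (inv_pos.mpr hIpos) hJ0
    have hφm : φ m < 1 := by
      rw [← havg]
      exact hcase
    have hm1 : 1 < m := by
      rcases lt_trichotomy m 1 with h | h | h
      · have := hφ.strictAntiOn (Set.mem_Ioi.mpr hm0) (Set.mem_Ioi.mpr one_pos) h
        rw [hφ.one] at this
        linarith
      · rw [h, hφ.one] at hφm
        linarith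
      · exact h
    have : I * 1 < I * m := by
      apply mul_lt_mul_of_pos_left hm1 hIpos
    rw [hmJ] at this
    have hJI : J = I * (I⁻¹ * J) := by field_simp
    nlinarith

end core


section mainlem
variable {n : ℕ}

lemma rpow_split {x p : ℝ} (hx : 0 < x) : x ^ p = x ^ (p-1) * x := by
  have h := Real.rpow_add hx (p-1) 1
  rw [Real.rpow_one] at h
  rw [← h, sub_add_cancel]

lemma div_mul_rpow {x y : ℝ} (hy : 0 < y) (p : ℝ) : (x / y) * y ^ p = x * y ^ (p-1) := by
  rw [rpow_split hy]
  calc (x / y) * (y^(p-1) * y) = x * y^(p-1) * (y / y) := by ring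
  _ = x * y^(p-1) := by rw [div_self hy.ne', mul_one]

lemma rpow_sum_le {a b p : ℝ} (ha : 0 < a) (hb : 0 < b) (hp : 1 ≤ p) :
    a * b ^ (p-1) + b * a ^ (p-1) ≤ a ^ p + b ^ p := by
  have hA : a ^ p = a ^ (p-1) * a := rpow_split ha
  have hB : b ^ p = b ^ (p-1) * b := rpow_split hb
  have hkey : 0 ≤ (a - b) * (a ^ (p-1) - b ^ (p-1)) := by
    rcases le_total a b with h | h
    · have h2 : a ^ (p-1) ≤ b ^ (p-1) := Real.rpow_le_rpow ha.le h (by linarith)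
      nlinarith
    · have h2 : b ^ (p-1) ≤ a ^ (p-1) := Real.rpow_le_rpow hb.le h (by linarith)
      nlinarith
  nlinarith

lemma integral_sph_pos (hn : 0 < n) {g : sphere (0:Euc n) 1 → ℝ} (hg : Continuous g)
    (hgpos : ∀ u, 0 < g u) : 0 < ∫ u, g u ∂(sphMeasure n) := by
  haveI := sphere_nonempty' hn
  obtain ⟨u0, -, hu0⟩ := isCompact_univ.exists_isMinOn univ_nonempty hg.continuousOn
  have h1 : ∫ (_ : sphere (0:Euc n) 1), g u0 ∂(sphMeasure n) ≤ ∫ u, g u ∂(sphMeasure n) :=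
    integral_mono (integrable_const _) (cont_integrable hg) fun u => isMinOn_iff.mp hu0 u trivial
  rw [integral_const, smul_eq_mul, measureReal_def] at h1
  have h2 : 0 < ((sphMeasure n) Set.univ).toReal :=
    ENNReal.toReal_pos (sphMeasure_univ_pos hn).ne' (measure_ne_top _ _)
  nlinarith [hgpos u0]

end mainlem


/-- Uniqueness: if `A_{φ,i}(K,Q)/A_i(K) = A_{φ,i}(L,Q)/A_i(L)` for all
`Q ∈ ℳ`, then `K` and `L` have the same half-width function. -/
theorem orliczMixedWidthIntegral_unique_right {n : ℕ} (hn : 2 ≤ n) (i : ℕ) (hi : i < n)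
    (φ : ℝ → ℝ) (hφ : IsOrliczPhi φ) (hstrict : StrictConvexOn ℝ (Set.Ioi (0 : ℝ)) φ)
    (M : Set (Set (Euc n))) (hM : ∀ Q ∈ M, IsConvexBody Q)
    (K L : Set (Euc n)) (hKM : K ∈ M) (hLM : L ∈ M)
    (h : ∀ Q ∈ M, orliczMixedWidthIntegral n i φ K Q / widthIntegral n i K =
      orliczMixedWidthIntegral n i φ L Q / widthIntegral n i L) :
    ∀ u : Euc n, ‖u‖ = 1 → halfWidth K u = halfWidth L u := by
  have hn0 : 0 < n := by omega
  have hKb := hM K hKM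
  have hLb := hM L hLM
  set μ := sphMeasure n with hμ
  set p : ℝ := (n:ℝ) - i with hp
  have hp1 : (1:ℝ) ≤ p := by
    have : (i:ℝ) + 1 ≤ (n:ℝ) := by exact_mod_cast Nat.succ_le_of_lt hi
    simp only [hp]; linarith
  have hbKpos : ∀ u : sphere (0:Euc n) 1, 0 < halfWidth K (u:Euc n) :=
    fun u => halfWidth_pos hKb (norm_eq_of_mem_sphere u)
  have hbLpos : ∀ u : sphere (0:Euc n) 1, 0 < halfWidth L (u:Euc n) :=
    fun u => halfWidth_pos hLb (norm_eq_of_mem_sphere u)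
  have hbKc : Continuous fun u : sphere (0:Euc n) 1 => halfWidth K (u:Euc n) :=
    (halfWidth_continuous hKb).comp continuous_subtype_val
  have hbLc : Continuous fun u : sphere (0:Euc n) 1 => halfWidth L (u:Euc n) :=
    (halfWidth_continuous hLb).comp continuous_subtype_val
  have hwKc : Continuous fun u : sphere (0:Euc n) 1 => halfWidth K (u:Euc n) ^ p :=
    hbKc.rpow_const fun u => Or.inl (hbKpos u).ne'
  have hwLc : Continuous fun u : sphere (0:Euc n) 1 => halfWidth L (u:Euc n) ^ p :=
    hbLc.rpow_const fun u => Or.inl (hbLpos u).ne'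
  have hIK : 0 < ∫ u : sphere (0:Euc n) 1, halfWidth K (u:Euc n) ^ p ∂μ :=
    integral_sph_pos hn0 hwKc fun u => Real.rpow_pos_of_pos (hbKpos u) p
  have hIL : 0 < ∫ u : sphere (0:Euc n) 1, halfWidth L (u:Euc n) ^ p ∂μ :=
    integral_sph_pos hn0 hwLc fun u => Real.rpow_pos_of_pos (hbLpos u) p
  have hnne : (1:ℝ) / (n:ℝ) ≠ 0 := by positivity
  have hwK : widthIntegral n i K = (1/(n:ℝ)) * ∫ u : sphere (0:Euc n) 1,
      halfWidth K (u:Euc n) ^ p ∂μ := rfl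
  have hwL : widthIntegral n i L = (1/(n:ℝ)) * ∫ u : sphere (0:Euc n) 1,
      halfWidth L (u:Euc n) ^ p ∂μ := rfl
  have hwKpos : 0 < widthIntegral n i K := by rw [hwK]; positivity
  have hwLpos : 0 < widthIntegral n i L := by rw [hwL]; positivity
  have hKK : orliczMixedWidthIntegral n i φ K K = widthIntegral n i K := by
    unfold orliczMixedWidthIntegral widthIntegral
    congr 1
    refine integral_congr_ae (Filter.Eventually.of_forall fun u => ?_)
    beta_reduce
    rw [div_self (hbKpos u).ne', hφ.one, one_mul]
  have hLL : orliczMixedWidthIntegral n i φ L L = widthIntegral n i L := by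
    unfold orliczMixedWidthIntegral widthIntegral
    congr 1
    refine integral_congr_ae (Filter.Eventually.of_forall fun u => ?_)
    beta_reduce
    rw [div_self (hbLpos u).ne', hφ.one, one_mul]
  -- Q = K : A_{φ,i}(L,K) = A_i(L)
  have h1 := h K hKM
  rw [hKK, div_self hwKpos.ne'] at h1
  have h1' : orliczMixedWidthIntegral n i φ L K = widthIntegral n i L :=
    (div_eq_one_iff_eq hwLpos.ne').mp h1.symm
  -- Q = L : A_{φ,i}(K,L) = A_i(K)
  have h2 := h L hLM
  rw [hLL, div_self hwLpos.ne'] at h2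
  have h2' : orliczMixedWidthIntegral n i φ K L = widthIntegral n i K :=
    (div_eq_one_iff_eq hwKpos.ne').mp h2
  have hEqL : ∫ u : sphere (0:Euc n) 1,
      φ (halfWidth K (u:Euc n) / halfWidth L (u:Euc n)) * halfWidth L (u:Euc n) ^ p ∂μ
      = ∫ u : sphere (0:Euc n) 1, halfWidth L (u:Euc n) ^ p ∂μ :=
    mul_left_cancel₀ hnne (h1'.trans hwL)
  have hEqK : ∫ u : sphere (0:Euc n) 1,
      φ (halfWidth L (u:Euc n) / halfWidth K (u:Euc n)) * halfWidth K (u:Euc n) ^ p ∂μ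
      = ∫ u : sphere (0:Euc n) 1, halfWidth K (u:Euc n) ^ p ∂μ :=
    mul_left_cancel₀ hnne (h2'.trans hwK)
  rcases jensen_step hn hi hφ hstrict hKb hLb hEqK with hcK | hcK
  · intro u hu
    exact (hcK ⟨u, by simpa [mem_sphere_zero_iff_norm] using hu⟩).symm
  rcases jensen_step hn hi hφ hstrict hLb hKb hEqL with hcL | hcL
  · intro u hu
    exact hcL ⟨u, by simpa [mem_sphere_zero_iff_norm] using hu⟩
  -- both strict : contradiction
  exfalso
  have e1 : ∫ u : sphere (0:Euc n) 1,
      (halfWidth L (u:Euc n) / halfWidth K (u:Euc n)) * halfWidth K (u:Euc n) ^ p ∂μ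
      = ∫ u : sphere (0:Euc n) 1, halfWidth L (u:Euc n) * halfWidth K (u:Euc n) ^ (p-1) ∂μ := by
    refine integral_congr_ae (Filter.Eventually.of_forall fun u => ?_)
    beta_reduce
    exact div_mul_rpow (hbKpos u) p
  have e2 : ∫ u : sphere (0:Euc n) 1,
      (halfWidth K (u:Euc n) / halfWidth L (u:Euc n)) * halfWidth L (u:Euc n) ^ p ∂μ
      = ∫ u : sphere (0:Euc n) 1, halfWidth K (u:Euc n) * halfWidth L (u:Euc n) ^ (p-1) ∂μ := by
    refine integral_congr_ae (Filter.Eventually.of_forall fun u => ?_)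
    beta_reduce
    exact div_mul_rpow (hbLpos u) p
  rw [e1] at hcK
  rw [e2] at hcL
  have hKc' : Continuous fun u : sphere (0:Euc n) 1 => halfWidth K (u:Euc n) ^ (p-1) :=
    hbKc.rpow_const fun u => Or.inl (hbKpos u).ne'
  have hLc' : Continuous fun u : sphere (0:Euc n) 1 => halfWidth L (u:Euc n) ^ (p-1) :=
    hbLc.rpow_const fun u => Or.inl (hbLpos u).ne'
  have hint1 : Integrable (fun u : sphere (0:Euc n) 1 =>
      halfWidth L (u:Euc n) * halfWidth K (u:Euc n) ^ (p-1)) μ := cont_integrable (hbLc.mul hKc')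
  have hint2 : Integrable (fun u : sphere (0:Euc n) 1 =>
      halfWidth K (u:Euc n) * halfWidth L (u:Euc n) ^ (p-1)) μ := cont_integrable (hbKc.mul hLc')
  have hint3 := cont_integrable hwKc
  have hint4 := cont_integrable hwLc
  have hmono : ∫ u : sphere (0:Euc n) 1,
      (halfWidth L (u:Euc n) * halfWidth K (u:Euc n) ^ (p-1)
        + halfWidth K (u:Euc n) * halfWidth L (u:Euc n) ^ (p-1)) ∂μ
      ≤ ∫ u : sphere (0:Euc n) 1,
        (halfWidth K (u:Euc n) ^ p + halfWidth L (u:Euc n) ^ p) ∂μ := by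
    apply integral_mono (hint1.add hint2) (hint3.add hint4)
    intro u
    have := rpow_sum_le (hbLpos u) (hbKpos u) hp1
    simp only [Pi.add_apply]
    linarith
  rw [integral_add hint1 hint2, integral_add hint3 hint4] at hmono
  linarith

end
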